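/- Under the stated setup, let p ∉ A ∪ R belong to the symmetric difference of M* and M_t (i.e., p ∈ M* \ M_t or p ∈ M_t \ M*), and let M̃_p be a maximizer of MinW(·, ŵ) over {M ∈ 𝓜_R : p ∉ M} if p ∈ M_t, and over {M ∈ 𝓜_R : p ∈ M} if p ∉ M_t (this collection contains M* and so is nonempty). Then MinW(M_t, ŵ) − MinW(M̃_p, ŵ) < Δ/4. -/

import Mathlib

/-!
`M_t ≠ M*` since `p` separates them, so by uniqueness the `w`-bottleneck arm `e` of `M_t` has
`w e < OPT`. As every arm of `M* ⊇ A` has weight at least `OPT`, `e ∉ A`, and `e ∉ R`, so `ŵ` is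
`Δ/8`-accurate at `e`: `MinW (M_t, ŵ) < OPT + Δ/8`. On `M*` the estimate `ŵ` is accurate or
optimistic, so `MinW (M*, ŵ) > OPT - Δ/8`. Finally `M*` is feasible for the problem defining
`M̃_p`, whence `MinW (M̃_p, ŵ) ≥ MinW (M*, ŵ)`.
-/

/-- The bottleneck value of a super arm `M` under weights `v`:
`MinW (M, v) = min_{e ∈ M} v e` (defaulting to `0` on the empty set). -/
noncomputable def MinW {α : Type*} (M : Finset α) (v : α → ℝ) : ℝ :=
  if h : M.Nonempty then M.inf' h v else 0

section MinW

variable {α : Type*} {M : Finset α} {v w : α → ℝ}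

theorem MinW_of_nonempty (hM : M.Nonempty) : MinW M v = M.inf' hM v := dif_pos hM

theorem MinW_le_of_mem {i : α} (hi : i ∈ M) : MinW M v ≤ v i := by
  rw [MinW_of_nonempty ⟨i, hi⟩]
  exact Finset.inf'_le v hi

theorem exists_mem_eq_MinW (hM : M.Nonempty) : ∃ e ∈ M, MinW M v = v e := by
  rw [MinW_of_nonempty hM]
  exact Finset.exists_mem_eq_inf' hM v

theorem lt_MinW_iff (hM : M.Nonempty) {c : ℝ} : c < MinW M v ↔ ∀ i ∈ M, c < v i := by
  rw [MinW_of_nonempty hM, Finset.lt_inf'_iff]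

/-- The approximation is only needed at the `w`-bottleneck arm of `M`, which lies below `c`. -/
theorem MinW_lt_add_of_approx (hM : M.Nonempty) {c ε : ℝ} (hc : MinW M w < c)
    (happrox : ∀ i ∈ M, w i < c → v i < w i + ε) : MinW M v < c + ε := by
  obtain ⟨e, he, hMe⟩ := exists_mem_eq_MinW (v := w) hM
  calc MinW M v ≤ v e := MinW_le_of_mem he
    _ < w e + ε := happrox e he (hMe ▸ hc)
    _ < c + ε := by linarith

theorem sub_lt_MinW_of_approx (hM : M.Nonempty) {ε : ℝ} (happrox : ∀ i ∈ M, w i - ε < v i) :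
    MinW M w - ε < MinW M v :=
  (lt_MinW_iff hM).2 fun i hi => lt_of_le_of_lt (by linarith [MinW_le_of_mem (v := w) hi])
    (happrox i hi)

end MinW

theorem stmt_9_general {α : Type*} [DecidableEq α]
    (𝓜 : Finset (Finset α)) (h𝓜 : ∀ M ∈ 𝓜, M.Nonempty)
    (w : α → ℝ) (Mstar : Finset α) (hstar : Mstar ∈ 𝓜)
    (hunique : ∀ M ∈ 𝓜, M ≠ Mstar → MinW M w < MinW Mstar w)
    (A R : Finset α) (hA : A ⊆ Mstar) (hR : R ∩ Mstar = ∅)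
    (Δ : ℝ) (hΔ : 0 < Δ) (what : α → ℝ)
    (hw1 : ∀ i, i ∉ A ∪ R → |what i - w i| < Δ / 8)
    (hw2 : ∀ i ∈ A, w i ≤ what i)
    (Mt : Finset α) (hMt1 : Mt ∈ 𝓜) (hMt2 : Mt ∩ R = ∅)
    (p : α)
    (hsym : (p ∈ Mstar ∧ p ∉ Mt) ∨ (p ∈ Mt ∧ p ∉ Mstar))
    -- `M̃_p` is a maximizer of `MinW (·, ŵ)` over the constrained collection
    (Mtp : Finset α)
    (hMtpmax : ∀ M ∈ 𝓜, M ∩ R = ∅ → (if p ∈ Mt then p ∉ M else p ∈ M) →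
      MinW M what ≤ MinW Mtp what) :
    MinW Mt what - MinW Mtp what < Δ / 4 := by
  have hMt_ne : Mt ≠ Mstar := by rintro rfl; tauto
  have hstar_feasible : if p ∈ Mt then p ∉ Mstar else p ∈ Mstar := by split_ifs <;> tauto
  have hRstar : ∀ i ∈ Mstar, i ∉ R := fun i hi hiR => by
    simpa [hR] using Finset.mem_inter.2 ⟨hiR, hi⟩
  have hub : MinW Mt what < MinW Mstar w + Δ / 8 := by
    refine MinW_lt_add_of_approx (h𝓜 Mt hMt1) (hunique Mt hMt1 hMt_ne) fun i hi hwi => ?_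
    have hiA : i ∉ A := fun hiA => hwi.not_ge (MinW_le_of_mem (hA hiA))
    have hiR : i ∉ R := fun hiR => by simpa [hMt2] using Finset.mem_inter.2 ⟨hi, hiR⟩
    linarith [(abs_lt.1 (hw1 i (by simp [hiA, hiR]))).2]
  have hlb : MinW Mstar w - Δ / 8 < MinW Mstar what := by
    refine sub_lt_MinW_of_approx (h𝓜 Mstar hstar) fun i hi => ?_
    by_cases hiA : i ∈ A
    · linarith [hw2 i hiA]
    · linarith [(abs_lt.1 (hw1 i (by simp [hiA, hRstar i hi]))).1]
  have := hMtpmax Mstar hstar (by rwa [Finset.inter_comm]) hstar_feasible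
  linarith

theorem stmt_9 {α : Type*} [Fintype α] [DecidableEq α]
    (𝓜 : Finset (Finset α)) (h𝓜 : ∀ M ∈ 𝓜, M.Nonempty)
    (w : α → ℝ) (Mstar : Finset α) (hstar : Mstar ∈ 𝓜)
    (hunique : ∀ M ∈ 𝓜, M ≠ Mstar → MinW M w < MinW Mstar w)
    (A R : Finset α) (hA : A ⊆ Mstar) (hR : R ∩ Mstar = ∅)
    (Δ : ℝ) (hΔ : 0 < Δ) (what : α → ℝ)
    (hw1 : ∀ i, i ∉ A ∪ R → |what i - w i| < Δ / 8)
    (hw2 : ∀ i ∈ A, w i ≤ what i)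
    (Mt : Finset α) (hMt1 : Mt ∈ 𝓜) (hMt2 : Mt ∩ R = ∅)
    (hMtmax : ∀ M ∈ 𝓜, M ∩ R = ∅ → MinW M what ≤ MinW Mt what)
    (p : α) (hp : p ∉ A ∪ R)
    (hsym : (p ∈ Mstar ∧ p ∉ Mt) ∨ (p ∈ Mt ∧ p ∉ Mstar))
    -- `M̃_p` is a maximizer of `MinW (·, ŵ)` over the constrained collection
    (Mtp : Finset α) (hMtp1 : Mtp ∈ 𝓜) (hMtp2 : Mtp ∩ R = ∅)
    (hMtp3 : if p ∈ Mt then p ∉ Mtp else p ∈ Mtp)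
    (hMtpmax : ∀ M ∈ 𝓜, M ∩ R = ∅ → (if p ∈ Mt then p ∉ M else p ∈ M) →
      MinW M what ≤ MinW Mtp what) :
    MinW Mt what - MinW Mtp what < Δ / 4 :=
  stmt_9_general 𝓜 h𝓜 w Mstar hstar hunique A R hA hR Δ hΔ what hw1 hw2 Mt hMt1 hMt2 p hsym Mtp
    hMtpmax
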